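/- arXiv:2510.03791 — 14 statements merged into one kernel-verified Lean document; each statement's English description precedes it below -/
import Mathlib

section
/- Every multiplication A-module E is an annihilator multiplication module. -/
/-- An `A`-module `E` is an *annihilator multiplication module* if for every `e ∈ E`
there exists a finitely generated ideal `I` of `A` such that `ann(e) = ann(IE)`. -/
def IsAnnMultiplication (A : Type*) [CommRing A] (E : Type*) [AddCommGroup E]
    [Module A E] : Prop :=
  ∀ e : E, ∃ I : Ideal A, I.FG ∧
    (Submodule.span A {e}).annihilator = (I • (⊤ : Submodule A E)).annihilator

/-! In a multiplication module the cyclic submodule `Ae` equals `IE` for some ideal `I`.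
Since `e ∈ IE` is a finite sum of products `a • x` with `a ∈ I`, already `e ∈ JE` for a finitely
generated `J ≤ I`, and then `Ae ≤ JE ≤ IE = Ae`; so `Ae = JE` and in particular
`ann(e) = ann(JE)`. -/

namespace Submodule

variable {R M : Type*} [CommSemiring R] [AddCommMonoid M] [Module R M]

theorem exists_fg_le_and_mem_smul {I : Ideal R} {N : Submodule R M} {x : M} (hx : x ∈ I • N) :
    ∃ J : Ideal R, J.FG ∧ J ≤ I ∧ x ∈ J • N := by
  refine smul_induction_on hx (fun a ha y hy ↦ ?_) ?_
  · exact ⟨Ideal.span {a}, fg_span_singleton a, (Ideal.span_singleton_le_iff_mem I).2 ha,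
      smul_mem_smul (mem_span_singleton_self a) hy⟩
  · rintro y z ⟨J₁, hJ₁, hJ₁I, hyJ₁⟩ ⟨J₂, hJ₂, hJ₂I, hzJ₂⟩
    exact ⟨J₁ ⊔ J₂, FG.sup hJ₁ hJ₂, sup_le hJ₁I hJ₂I,
      add_mem (smul_mono_left le_sup_left hyJ₁) (smul_mono_left le_sup_right hzJ₂)⟩

theorem exists_fg_span_singleton_eq_smul {I : Ideal R} {N : Submodule R M} {x : M}
    (h : span R {x} = I • N) : ∃ J : Ideal R, J.FG ∧ span R {x} = J • N := by
  obtain ⟨J, hJ, hJI, hxJ⟩ := exists_fg_le_and_mem_smul (h ▸ mem_span_singleton_self x)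
  exact ⟨J, hJ, le_antisymm (span_singleton_le_iff_mem x _ |>.2 hxJ) (h ▸ smul_mono_left hJI)⟩

end Submodule

theorem multiplication_isAnnMultiplication_general {A : Type*} [CommRing A]
    {E : Type*} [AddCommGroup E] [Module A E]
    (hmul : ∀ V : Submodule A E, ∃ I : Ideal A, V = I • (⊤ : Submodule A E)) :
    IsAnnMultiplication A E := by
  intro e
  obtain ⟨I, hI⟩ := hmul (Submodule.span A {e})
  obtain ⟨J, hJ, heJ⟩ := Submodule.exists_fg_span_singleton_eq_smul hI
  exact ⟨J, hJ, by rw [heJ]⟩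

/-- Every multiplication module is an annihilator multiplication module. -/
theorem multiplication_isAnnMultiplication {A : Type*} [CommRing A] [Nontrivial A]
    {E : Type*} [AddCommGroup E] [Module A E] [Nontrivial E]
    (hmul : ∀ V : Submodule A E, ∃ I : Ideal A, V = I • (⊤ : Submodule A E)) :
    IsAnnMultiplication A E :=
  multiplication_isAnnMultiplication_general hmul
end

section
/- If E is an annihilator multiplication A-module and V is a finitely generated submodule of E, then there exists a finitely generated ideal I of A such that ann(V) = ann(IE). -/
theorem annihilator_eq_of_fg_general {A : Type*} [CommRing A]
    {E : Type*} [AddCommGroup E] [Module A E]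
    (hE : IsAnnMultiplication A E) (V : Submodule A E) (hV : V.FG) :
    ∃ I : Ideal A, I.FG ∧ V.annihilator = (I • (⊤ : Submodule A E)).annihilator := by
  -- `ann(V ⊔ W) = ann V ⊓ ann W` and `(I ⊔ J) E = IE ⊔ JE`, so the witnesses of the
  -- cyclic submodules generating `V` can be added up.
  induction V, hV using Submodule.fg_induction with
  | singleton e => exact hE e
  | sup V W _ _ hV hW =>
    obtain ⟨I, hI, hVI⟩ := hV
    obtain ⟨J, hJ, hWJ⟩ := hW
    refine ⟨I ⊔ J, Submodule.FG.sup hI hJ, ?_⟩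
    rw [Submodule.annihilator_sup, hVI, hWJ, Submodule.sup_smul, Submodule.annihilator_sup]

/-- If `E` is an annihilator multiplication module and `V` is a finitely generated
submodule of `E`, then there is a finitely generated ideal `I` with `ann(V) = ann(IE)`. -/
theorem annihilator_eq_of_fg {A : Type*} [CommRing A] [Nontrivial A]
    {E : Type*} [AddCommGroup E] [Module A E] [Nontrivial E]
    (hE : IsAnnMultiplication A E) (V : Submodule A E) (hV : V.FG) :
    ∃ I : Ideal A, I.FG ∧ V.annihilator = (I • (⊤ : Submodule A E)).annihilator :=
  annihilator_eq_of_fg_general hE V hV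
end

section
/- If E is an annihilator multiplication A-module and V is any submodule of E (not necessarily finitely generated), then there exists an ideal I of A such that ann(V) = ann(IE). -/
/-! Annihilators turn suprema of submodules into infima, so `ann(V) = ⋂_{e ∈ V} ann(e)`, and the
same holds for `(⨆ I_e) E = ⨆ I_e E`; choosing `I_e` with `ann(e) = ann(I_e E)` for each `e ∈ V`,
the ideal `⨆_{e ∈ V} I_e` works. -/

namespace Submodule

variable {A : Type*} [CommRing A] {E : Type*} [AddCommGroup E] [Module A E]

theorem annihilator_eq_iInf_annihilator_span_singleton (V : Submodule A E) :
    V.annihilator = ⨅ e : V, (A ∙ (e : E)).annihilator := by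
  rw [← annihilator_iSup, iSup_span, ← Set.range_eq_iUnion, Subtype.range_coe, span_eq]

theorem annihilator_iSup_smul_top {ι : Sort*} (I : ι → Ideal A) :
    ((⨆ i, I i) • (⊤ : Submodule A E)).annihilator =
      ⨅ i, (I i • (⊤ : Submodule A E)).annihilator := by
  rw [iSup_smul, annihilator_iSup]

end Submodule

theorem annihilator_eq_of_submodule_general {A : Type*} [CommRing A]
    {E : Type*} [AddCommGroup E] [Module A E]
    (hE : IsAnnMultiplication A E) (V : Submodule A E) :
    ∃ I : Ideal A, V.annihilator = (I • (⊤ : Submodule A E)).annihilator := by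
  choose I _ hI using hE
  refine ⟨⨆ e : V, I e, ?_⟩
  rw [Submodule.annihilator_eq_iInf_annihilator_span_singleton,
    Submodule.annihilator_iSup_smul_top]
  exact iInf_congr fun e => hI e

/-- If `E` is an annihilator multiplication module and `V` is any submodule of `E`,
then there is an ideal `I` of `A` with `ann(V) = ann(IE)`. -/
theorem annihilator_eq_of_submodule {A : Type*} [CommRing A] [Nontrivial A]
    {E : Type*} [AddCommGroup E] [Module A E] [Nontrivial E]
    (hE : IsAnnMultiplication A E) (V : Submodule A E) :
    ∃ I : Ideal A, V.annihilator = (I • (⊤ : Submodule A E)).annihilator :=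
  annihilator_eq_of_submodule_general hE V
end

section
/- Let n ≥ 1, let A_i be a commutative ring and E_i a nonzero unital A_i-module for each i = 1,…,n, and regard E = E_1 × ⋯ × E_n as a module over the product ring A = A_1 × ⋯ × A_n with componentwise scalar multiplication. Then E is an annihilator multiplication A-module if and only if E_i is an annihilator multiplication A_i-module for each i = 1,…,n. -/
namespace Submodule

variable {A E : Type*} [CommRing A] [AddCommGroup E] [Module A E]

theorem annihilator_smul_top_eq_colon (I : Ideal A) :
    (I • (⊤ : Submodule A E)).annihilator = (Module.annihilator A E).colon I := by
  ext a
  rw [mem_annihilator]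
  change I • ⊤ ≤ LinearMap.ker (LinearMap.lsmul A E a) ↔ _
  simp only [smul_le, mem_top, LinearMap.mem_ker, LinearMap.lsmul_apply, forall_const,
    mem_colon, SetLike.mem_coe, Module.mem_annihilator, smul_eq_mul, mul_smul]

end Submodule

theorem isAnnMultiplication_iff_exists_finite_colon {A E : Type*} [CommRing A] [AddCommGroup E]
    [Module A E] :
    IsAnnMultiplication A E ↔ ∀ e : E, ∃ S : Set A, S.Finite ∧
      (Submodule.span A {e}).annihilator = (Module.annihilator A E).colon S := by
  simp only [IsAnnMultiplication, Submodule.annihilator_smul_top_eq_colon]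
  refine forall_congr' fun e => ⟨?_, ?_⟩
  · rintro ⟨I, hI, h⟩
    obtain ⟨S, hS, rfl⟩ := Submodule.fg_def.mp hI
    exact ⟨S, hS, h.trans Ideal.colon_span⟩
  · rintro ⟨S, hS, h⟩
    exact ⟨_, Submodule.fg_def.mpr ⟨S, hS, rfl⟩, h.trans Ideal.colon_span.symm⟩

namespace Ideal

variable {ι : Type*} {A : ι → Type*} [∀ i, CommRing (A i)]

theorem single_mem_pi_iff [DecidableEq ι] {I : ∀ i, Ideal (A i)} {i : ι} {r : A i} :
    Pi.single i r ∈ pi I ↔ r ∈ I i :=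
  ⟨fun h => by simpa using h i, single_mem_pi⟩

theorem pi_colon (I : ∀ i, Ideal (A i)) (S : Set (∀ i, A i)) :
    (pi I).colon S = pi fun i => (I i).colon ((fun s => s i) '' S) := by
  ext a
  simp only [Submodule.mem_colon, mem_pi, Set.forall_mem_image, smul_eq_mul, Pi.mul_apply]
  exact ⟨fun h i s hs => h s hs i, fun h s hs i => h i hs⟩

theorem pi_colon_iUnion_image_single [DecidableEq ι] (I : ∀ i, Ideal (A i))
    (T : ∀ i, Set (A i)) :
    (pi I).colon (⋃ i, Pi.single i '' T i) = pi fun i => (I i).colon (T i) := by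
  ext a
  rw [mem_pi]
  simp only [Submodule.colon_iUnion, Submodule.mem_iInf, Submodule.mem_colon,
    Set.forall_mem_image, smul_eq_mul, ← Pi.single_mul_right, single_mem_pi_iff]

end Ideal

section Pi

variable {ι : Type*} {A : ι → Type*} [∀ i, CommRing (A i)]
  {E : ι → Type*} [∀ i, AddCommGroup (E i)] [∀ i, Module (A i) (E i)]

theorem Module.annihilator_pi_eq_pi :
    Module.annihilator (∀ i, A i) (∀ i, E i) =
      Ideal.pi fun i => Module.annihilator (A i) (E i) := by
  classical
  ext a
  simp only [Module.mem_annihilator, Ideal.mem_pi, funext_iff, Pi.smul_apply', Pi.zero_apply]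
  exact ⟨fun h i m => by simpa using h (Pi.single i m) i, fun h m i => h i (m i)⟩

theorem Submodule.annihilator_span_singleton_pi (e : ∀ i, E i) :
    (span (∀ i, A i) {e}).annihilator = Ideal.pi fun i => (span (A i) {e i}).annihilator := by
  ext a
  simp only [mem_annihilator_span_singleton, Ideal.mem_pi, funext_iff, Pi.smul_apply',
    Pi.zero_apply]

theorem IsAnnMultiplication.of_pi (h : IsAnnMultiplication (∀ i, A i) (∀ i, E i)) (i : ι) :
    IsAnnMultiplication (A i) (E i) := by
  classical
  rw [isAnnMultiplication_iff_exists_finite_colon] at h ⊢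
  intro x
  obtain ⟨S, hS, hann⟩ := h (Pi.single i x)
  rw [Submodule.annihilator_span_singleton_pi, Module.annihilator_pi_eq_pi, Ideal.pi_colon] at hann
  refine ⟨(fun s => s i) '' S, hS.image _, ?_⟩
  ext b
  simpa [Ideal.single_mem_pi_iff] using SetLike.ext_iff.mp hann (Pi.single i b)

theorem IsAnnMultiplication.pi [Finite ι] (h : ∀ i, IsAnnMultiplication (A i) (E i)) :
    IsAnnMultiplication (∀ i, A i) (∀ i, E i) := by
  classical
  simp only [isAnnMultiplication_iff_exists_finite_colon] at h ⊢
  intro e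
  choose T hT hann using fun i => h i (e i)
  refine ⟨⋃ i, Pi.single i '' T i, Set.finite_iUnion fun i => (hT i).image _, ?_⟩
  rw [Submodule.annihilator_span_singleton_pi, Module.annihilator_pi_eq_pi,
    Ideal.pi_colon_iUnion_image_single]
  exact congrArg Ideal.pi (funext hann)

end Pi

theorem pi_isAnnMultiplication_iff_general {n : ℕ}
    (A : Fin n → Type*) [∀ i, CommRing (A i)]
    (E : Fin n → Type*) [∀ i, AddCommGroup (E i)] [∀ i, Module (A i) (E i)] :
    IsAnnMultiplication (∀ i, A i) (∀ i, E i) ↔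
      ∀ i, IsAnnMultiplication (A i) (E i) :=
  ⟨IsAnnMultiplication.of_pi, IsAnnMultiplication.pi⟩

/-- A finite product `E = E₁ × ⋯ × Eₙ` over `A = A₁ × ⋯ × Aₙ` is an annihilator
multiplication module iff each `Eᵢ` is an annihilator multiplication `Aᵢ`-module. -/
theorem pi_isAnnMultiplication_iff {n : ℕ} (hn : 1 ≤ n)
    (A : Fin n → Type*) [∀ i, CommRing (A i)] [∀ i, Nontrivial (A i)]
    (E : Fin n → Type*) [∀ i, AddCommGroup (E i)] [∀ i, Module (A i) (E i)]
    [∀ i, Nontrivial (E i)] :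
    IsAnnMultiplication (∀ i, A i) (∀ i, E i) ↔
      ∀ i, IsAnnMultiplication (A i) (E i) :=
  pi_isAnnMultiplication_iff_general A E
end

section
/- Let E be a finitely generated A-module and T ⊆ A a multiplicatively closed set. If E is an annihilator multiplication A-module, then the localized module T⁻¹E is an annihilator multiplication module over the localized ring T⁻¹A. -/
namespace Submodule

variable {R M : Type*} [CommSemiring R] [AddCommMonoid M] [Module R M]

theorem FG.exists_mul_mem_annihilator {N : Submodule R M} (hN : N.FG) {p : Submonoid R}
    {r : R} (h : ∀ m ∈ N, ∃ u ∈ p, (u * r) • m = 0) : ∃ u ∈ p, u * r ∈ N.annihilator := by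
  obtain ⟨s, rfl⟩ := hN
  choose u hup hu using fun g : s => h g (subset_span g.2)
  refine ⟨∏ g ∈ s.attach, u g, prod_mem fun g _ => hup g, ?_⟩
  rw [mem_annihilator_span]
  intro g
  obtain ⟨v, hv⟩ := Finset.dvd_prod_of_mem u (Finset.mem_attach _ g)
  rw [hv, mul_right_comm, mul_comm, mul_smul, hu, smul_zero]

variable {S N : Type*} [CommSemiring S] [Algebra R S] [AddCommMonoid N] [Module R N]
  [Module S N] [IsScalarTower R S N] (p : Submonoid R) [IsLocalization p S]
  (f : M →ₗ[R] N) [IsLocalizedModule p f]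

theorem annihilator_localized' {M' : Submodule R M} (hM' : M'.FG) :
    (M'.localized' S p f).annihilator = M'.annihilator.map (algebraMap R S) := by
  refine le_antisymm (fun y hy => ?_) ?_
  · obtain ⟨⟨r, s⟩, rfl⟩ := IsLocalization.mk'_surjective p y
    rw [IsLocalization.mk'_mem_map_algebraMap_iff]
    refine hM'.exists_mul_mem_annihilator fun m hm => ?_
    have hrm : f (r • m) = 0 := by
      have := mem_annihilator.1 hy _ ⟨m, hm, 1, rfl⟩
      rwa [IsLocalizedModule.mk'_smul_mk', IsLocalizedModule.mk'_eq_zero] at this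
    obtain ⟨u, hu⟩ := (IsLocalizedModule.eq_zero_iff p f).1 hrm
    exact ⟨u, u.2, by rw [mul_smul]; exact hu⟩
  · rw [Ideal.map_le_iff_le_comap]
    intro r hr
    rw [Ideal.mem_comap, mem_annihilator]
    rintro _ ⟨m, hm, s, rfl⟩
    rw [algebraMap_smul, ← IsLocalizedModule.mk'_smul, mem_annihilator.1 hr m hm,
      IsLocalizedModule.mk'_zero]

theorem span_singleton_mk' (m : M) (s : p) :
    span S {IsLocalizedModule.mk' f m s} = (span R {m}).localized' S p f := by
  rw [localized'_span, Set.image_singleton, ← IsLocalizedModule.mk'_cancel' f m s,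
    Submonoid.smul_def, ← algebraMap_smul S (s : R),
    span_singleton_smul_eq (IsLocalization.map_units S s)]

end Submodule

theorem localizedModule_isAnnMultiplication_general {A : Type*} [CommRing A]
    {E : Type*} [AddCommGroup E] [Module A E] [Module.Finite A E]
    (T : Submonoid A) (hE : IsAnnMultiplication A E) :
    IsAnnMultiplication (Localization T) (LocalizedModule T E) := by
  intro x
  obtain ⟨⟨e, t⟩, rfl⟩ :=
    IsLocalizedModule.mk'_surjective T (LocalizedModule.mkLinearMap T E) x
  obtain ⟨I, hI, hann⟩ := hE e
  refine ⟨I.map (algebraMap A (Localization T)), hI.map _, ?_⟩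
  rw [Function.uncurry_apply_pair, Submodule.span_singleton_mk' T,
    ← Ideal.localized'_eq_map _ T,
    ← Submodule.localized'_top _ T (LocalizedModule.mkLinearMap T E),
    ← Submodule.localized'_smul,
    Submodule.annihilator_localized' T _ (Submodule.fg_span_singleton e),
    Submodule.annihilator_localized' T _ (Submodule.FG.smul hI Module.Finite.fg_top), hann]

/-- If `E` is a finitely generated annihilator multiplication `A`-module and `T ⊆ A` is
multiplicatively closed, then `T⁻¹E` is an annihilator multiplication `T⁻¹A`-module. -/
theorem localizedModule_isAnnMultiplication {A : Type*} [CommRing A] [Nontrivial A]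
    {E : Type*} [AddCommGroup E] [Module A E] [Nontrivial E] [Module.Finite A E]
    (T : Submonoid A) (hE : IsAnnMultiplication A E) :
    IsAnnMultiplication (Localization T) (LocalizedModule T E) :=
  localizedModule_isAnnMultiplication_general T hE
end

section
/- Let φ: E → E′ be an A-module homomorphism between A-modules E and E′ such that ann(E) = ann(E′). If φ is injective and E′ is an annihilator multiplication module, then E is an annihilator multiplication module. -/
/-! `ann(IE) = (ann E : I)` depends on `E` only through `ann E`, while an injective map preserves
`ann(e)`; so the ideal witnessing the property for `φ e` in `E'` also witnesses it for `e` in `E`. -/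

namespace Submodule

variable {R M : Type*} [CommSemiring R] [AddCommMonoid M] [Module R M]

theorem annihilator_smul_eq_colon (I : Ideal R) (N : Submodule R M) :
    (I • N).annihilator = N.annihilator.colon I := by
  ext r
  simp only [mem_colon, mem_annihilator, SetLike.mem_coe, smul_eq_mul]
  constructor
  · intro h i hi n hn
    rw [mul_smul]
    exact h _ (smul_mem_smul hi hn)
  · intro h x hx
    refine smul_induction_on hx (fun i hi n hn => ?_) (fun x y hx hy => ?_)
    · rw [← mul_smul]; exact h i hi n hn
    · rw [smul_add, hx, hy, add_zero]

theorem annihilator_span_singleton_map_of_injective {M' : Type*} [AddCommMonoid M'] [Module R M']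
    (f : M →ₗ[R] M') (hf : Function.Injective f) (x : M) :
    (span R {f x}).annihilator = (span R {x}).annihilator := by
  ext r
  simp only [mem_annihilator_span_singleton, ← map_smul, map_eq_zero_iff f hf]

end Submodule

theorem isAnnMultiplication_of_injective_general {A : Type*} [CommRing A]
    {E : Type*} [AddCommGroup E] [Module A E]
    {E' : Type*} [AddCommGroup E'] [Module A E']
    (φ : E →ₗ[A] E')
    (hann : (⊤ : Submodule A E).annihilator = (⊤ : Submodule A E').annihilator)
    (hinj : Function.Injective φ) (hE' : IsAnnMultiplication A E') :
    IsAnnMultiplication A E := by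
  intro e
  obtain ⟨I, hIfg, hI⟩ := hE' (φ e)
  refine ⟨I, hIfg, ?_⟩
  rw [← Submodule.annihilator_span_singleton_map_of_injective φ hinj, hI,
    Submodule.annihilator_smul_eq_colon, Submodule.annihilator_smul_eq_colon, hann]

/-- If `φ : E → E'` is an injective `A`-homomorphism, `ann(E) = ann(E')` and `E'` is an
annihilator multiplication module, then so is `E`. -/
theorem isAnnMultiplication_of_injective {A : Type*} [CommRing A] [Nontrivial A]
    {E : Type*} [AddCommGroup E] [Module A E] [Nontrivial E]
    {E' : Type*} [AddCommGroup E'] [Module A E'] [Nontrivial E']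
    (φ : E →ₗ[A] E')
    (hann : (⊤ : Submodule A E).annihilator = (⊤ : Submodule A E').annihilator)
    (hinj : Function.Injective φ) (hE' : IsAnnMultiplication A E') :
    IsAnnMultiplication A E :=
  isAnnMultiplication_of_injective_general φ hann hinj hE'
end

section
/- Let φ: E → E′ be an A-module homomorphism between A-modules E and E′ such that ann(E) = ann(E′). If φ is surjective, Ker(φ) is a prime submodule of E, and E is an annihilator multiplication module, then E′ is an annihilator multiplication module. -/
/-- A proper submodule `V` of `E` is a *prime submodule* if `a • e ∈ V` implies
`a ∈ (V :_A E)` or `e ∈ V`. -/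
def IsPrimeSubmodule {A : Type*} [CommRing A] {E : Type*} [AddCommGroup E]
    [Module A E] (V : Submodule A E) : Prop :=
  V ≠ ⊤ ∧ ∀ (a : A) (e : E), a • e ∈ V → a ∈ V.colon ⊤ ∨ e ∈ V

/-!
Write `K = ker φ` and `P = (K :_A E)`. Since `E' ≅ E / K`, the annihilator of the image of a
submodule `N ≤ E` is `(K :_A N)`, and primality of `K` forces `(K :_A N) = P` as soon as
`N ⊄ K`. Given `e ∉ K` with `ann(e) = ann(IE)`, both `ann(φ e)` and `ann(IE')` are therefore
`P`, unless `IE ≤ K`. But then `I` kills `E'`, hence kills `E` because `ann(E) = ann(E')`, so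
`ann(e) = ann(IE) = A` and `e = 0 ∈ K`.
-/

namespace Submodule

variable {R M M' : Type*} [CommRing R] [AddCommGroup M] [Module R M]
  [AddCommGroup M'] [Module R M']

theorem annihilator_map_eq_colon_ker (f : M →ₗ[R] M') (N : Submodule R M) :
    (N.map f).annihilator = (LinearMap.ker f).colon N := by
  ext r
  rw [mem_annihilator, mem_colon]
  constructor
  · intro h n hn
    rw [LinearMap.mem_ker, map_smul]
    exact h _ (mem_map_of_mem hn)
  · rintro h _ ⟨n, hn, rfl⟩
    rw [← map_smul]
    exact h n hn

theorem map_smul_top_of_surjective {f : M →ₗ[R] M'} (hf : Function.Surjective f) (I : Ideal R) :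
    (I • (⊤ : Submodule R M)).map f = I • ⊤ := by
  rw [map_smul'', map_top, LinearMap.range_eq_top.mpr hf]

theorem smul_top_eq_bot_of_le_ker {f : M →ₗ[R] M'} (hf : Function.Surjective f)
    (hann : (⊤ : Submodule R M).annihilator = (⊤ : Submodule R M').annihilator)
    {I : Ideal R} (hI : I • (⊤ : Submodule R M) ≤ LinearMap.ker f) :
    I • (⊤ : Submodule R M) = ⊥ := by
  rw [LinearMap.le_ker_iff_map, map_smul_top_of_surjective hf, ← le_annihilator_iff,
    ← hann, le_annihilator_iff] at hI
  exact hI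

end Submodule

theorem IsPrimeSubmodule.colon_eq_colon_univ_of_not_le {A E : Type*} [CommRing A]
    [AddCommGroup E] [Module A E] {V N : Submodule A E} (hV : IsPrimeSubmodule V)
    (hN : ¬N ≤ V) : V.colon N = V.colon ⊤ := by
  refine le_antisymm (fun a ha => ?_) (Submodule.colon_mono le_rfl (Set.subset_univ _))
  obtain ⟨n, hnN, hnV⟩ := SetLike.not_le_iff_exists.mp hN
  exact (hV.2 a n (Submodule.mem_colon.mp ha n hnN)).resolve_right hnV

theorem isAnnMultiplication_of_surjective_general {A : Type*} [CommRing A]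
    {E : Type*} [AddCommGroup E] [Module A E]
    {E' : Type*} [AddCommGroup E'] [Module A E']
    (φ : E →ₗ[A] E')
    (hann : (⊤ : Submodule A E).annihilator = (⊤ : Submodule A E').annihilator)
    (hsurj : Function.Surjective φ) (hker : IsPrimeSubmodule (LinearMap.ker φ))
    (hE : IsAnnMultiplication A E) :
    IsAnnMultiplication A E' := by
  intro e'
  obtain ⟨e, rfl⟩ := hsurj e'
  by_cases he : φ e = 0
  · exact ⟨⊥, Submodule.fg_bot, by simp [he]⟩
  obtain ⟨I, hIfg, hI⟩ := hE e
  refine ⟨I, hIfg, ?_⟩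
  have he_not_le : ¬Submodule.span A {e} ≤ LinearMap.ker φ := by
    rwa [Submodule.span_singleton_le_iff_mem, LinearMap.mem_ker]
  have hI_not_le : ¬I • (⊤ : Submodule A E) ≤ LinearMap.ker φ := by
    intro hle
    rw [Submodule.smul_top_eq_bot_of_le_ker hsurj hann hle, Submodule.annihilator_bot,
      Submodule.annihilator_eq_top_iff, Submodule.span_singleton_eq_bot] at hI
    exact he (by rw [hI, map_zero])
  rw [← Submodule.map_smul_top_of_surjective hsurj, ← Set.image_singleton, ← Submodule.map_span,
    Submodule.annihilator_map_eq_colon_ker, Submodule.annihilator_map_eq_colon_ker,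
    hker.colon_eq_colon_univ_of_not_le he_not_le, hker.colon_eq_colon_univ_of_not_le hI_not_le]

/-- If `φ : E → E'` is a surjective `A`-homomorphism whose kernel is a prime submodule,
`ann(E) = ann(E')` and `E` is an annihilator multiplication module, then so is `E'`. -/
theorem isAnnMultiplication_of_surjective {A : Type*} [CommRing A] [Nontrivial A]
    {E : Type*} [AddCommGroup E] [Module A E] [Nontrivial E]
    {E' : Type*} [AddCommGroup E'] [Module A E'] [Nontrivial E']
    (φ : E →ₗ[A] E')
    (hann : (⊤ : Submodule A E).annihilator = (⊤ : Submodule A E').annihilator)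
    (hsurj : Function.Surjective φ) (hker : IsPrimeSubmodule (LinearMap.ker φ))
    (hE : IsAnnMultiplication A E) :
    IsAnnMultiplication A E' :=
  isAnnMultiplication_of_surjective_general φ hann hsurj hker hE
end

section
/- Let E be an annihilator multiplication A-module and V a prime submodule of E such that ann(V) = (V :_A E). Then the quotient module E/V is an annihilator multiplication A-module. -/
/-! Primality of `V` says exactly that every nonzero element of `E ⧸ V` has the same
annihilator `(V :_A E)` as the whole quotient. In a module with this property the
annihilator condition holds with `I = A` for nonzero elements and with `I = 0` for zero. -/

theorem isAnnMultiplication_of_annihilator_span_singleton {A : Type*} [CommRing A]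
    {E : Type*} [AddCommGroup E] [Module A E]
    (h : ∀ x : E, x ≠ 0 → (Submodule.span A {x}).annihilator = Module.annihilator A E) :
    IsAnnMultiplication A E := by
  intro x
  by_cases hx : x = 0
  · exact ⟨⊥, Submodule.fg_bot, by simp [hx]⟩
  · refine ⟨⊤, ⟨{1}, by simp⟩, ?_⟩
    rw [Submodule.top_smul, Submodule.annihilator_top, h x hx]

theorem IsPrimeSubmodule.annihilator_span_mk {A : Type*} [CommRing A] {E : Type*}
    [AddCommGroup E] [Module A E] {V : Submodule A E} (hV : IsPrimeSubmodule V) {e : E}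
    (he : e ∉ V) :
    (Submodule.span A ({Submodule.Quotient.mk e} : Set (E ⧸ V))).annihilator =
      Module.annihilator A (E ⧸ V) := by
  ext a
  rw [Submodule.mem_annihilator_span_singleton, Submodule.annihilator_quotient,
    ← Submodule.Quotient.mk_smul, Submodule.Quotient.mk_eq_zero]
  exact ⟨fun hae => (hV.2 a e hae).resolve_right he,
    fun ha => Submodule.mem_colon.1 ha e trivial⟩

theorem quotient_isAnnMultiplication_general {A : Type*} [CommRing A]
    {E : Type*} [AddCommGroup E] [Module A E]
    (V : Submodule A E) (hprime : IsPrimeSubmodule V) :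
    IsAnnMultiplication A (E ⧸ V) := by
  refine isAnnMultiplication_of_annihilator_span_singleton fun x hx => ?_
  obtain ⟨e, rfl⟩ := Submodule.Quotient.mk_surjective V x
  exact hprime.annihilator_span_mk (mt (Submodule.Quotient.mk_eq_zero V).2 hx)

/-- If `E` is an annihilator multiplication module and `V` is a prime submodule with
`ann(V) = (V :_A E)`, then `E/V` is an annihilator multiplication module. -/
theorem quotient_isAnnMultiplication {A : Type*} [CommRing A] [Nontrivial A]
    {E : Type*} [AddCommGroup E] [Module A E] [Nontrivial E]
    (hE : IsAnnMultiplication A E) (V : Submodule A E) (hprime : IsPrimeSubmodule V)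
    (hcolon : V.annihilator = V.colon ⊤) :
    IsAnnMultiplication A (E ⧸ V) :=
  quotient_isAnnMultiplication_general V hprime
end

section
/- Let E be an annihilator multiplication A-module and V a submodule of E that is both pure in E and essential in E. Then V is an annihilator multiplication A-module. -/
/-!
If `a` kills `IV`, then purity gives `(aI)E ∩ V = aIV = 0`, so `aIE = 0` because `V` is
essential; hence `ann(IE) = ann(IV)` for every ideal `I`. Annihilators do not change when a
submodule of `V` is viewed inside `E`, so for `v ∈ V` the ideal `I` with `ann(v) = ann(IE)`
also gives `ann(v) = ann(IV)`.
-/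

namespace Submodule

variable {R M M' : Type*} [CommSemiring R] [AddCommMonoid M] [Module R M]
  [AddCommMonoid M'] [Module R M']

theorem annihilator_map_of_injective {f : M →ₗ[R] M'} (hf : Function.Injective f)
    (N : Submodule R M) : (N.map f).annihilator = N.annihilator :=
  (equivMapOfInjective f hf N).annihilator_eq.symm

theorem annihilator_smul_top_eq_of_pure_of_essential {V : Submodule R M}
    (hpure : ∀ I : Ideal R, I • ⊤ ⊓ V = I • V) (hess : ∀ K : Submodule R M, K ⊓ V = ⊥ → K = ⊥)
    (I : Ideal R) : (I • ⊤ : Submodule R M).annihilator = (I • V).annihilator := by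
  refine le_antisymm (annihilator_mono (smul_mono_right I le_top)) fun a ha => ?_
  rw [← Ideal.span_singleton_le_iff_mem, le_annihilator_iff] at ha ⊢
  rw [← smul_assoc, smul_eq_mul]
  apply hess
  rw [hpure, ← smul_eq_mul, smul_assoc, ha]

end Submodule

theorem IsAnnMultiplication.submodule {A E : Type*} [CommRing A] [AddCommGroup E] [Module A E]
    (hE : IsAnnMultiplication A E) {V : Submodule A E}
    (hV : ∀ I : Ideal A, (I • ⊤ : Submodule A E).annihilator = (I • V).annihilator) :
    IsAnnMultiplication A V := by
  intro v
  obtain ⟨I, hI, hann⟩ := hE v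
  refine ⟨I, hI, ?_⟩
  rw [← Submodule.annihilator_map_of_injective V.injective_subtype,
    ← Submodule.annihilator_map_of_injective V.injective_subtype, Submodule.map_span,
    Set.image_singleton, Submodule.map_smul'', Submodule.map_top, Submodule.range_subtype,
    ← hV]
  exact hann

theorem pure_essential_isAnnMultiplication_general {A : Type*} [CommRing A]
    {E : Type*} [AddCommGroup E] [Module A E]
    (hE : IsAnnMultiplication A E) (V : Submodule A E)
    (hpure : ∀ I : Ideal A, (I • (⊤ : Submodule A E)) ⊓ V = I • V)
    (hess : ∀ K : Submodule A E, K ⊓ V = ⊥ → K = ⊥) :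
    IsAnnMultiplication A V :=
  hE.submodule (Submodule.annihilator_smul_top_eq_of_pure_of_essential hpure hess)

/-- If `E` is an annihilator multiplication module and `V` is a pure and essential
submodule of `E`, then `V` is an annihilator multiplication module. -/
theorem pure_essential_isAnnMultiplication {A : Type*} [CommRing A] [Nontrivial A]
    {E : Type*} [AddCommGroup E] [Module A E] [Nontrivial E]
    (hE : IsAnnMultiplication A E) (V : Submodule A E)
    (hpure : ∀ I : Ideal A, (I • (⊤ : Submodule A E)) ⊓ V = I • V)
    (hne : V ≠ ⊥) (hess : ∀ K : Submodule A E, K ⊓ V = ⊥ → K = ⊥) :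
    IsAnnMultiplication A V :=
  pure_essential_isAnnMultiplication_general hE V hpure hess
end

section
/- Let E be an Armendariz A-module and let p(X) = a₀ + a₁X + ⋯ + a_kX^k ∈ A[X]. Then the annihilator in A[X] of the A[X]-submodule p(X)·E[X] of the polynomial module E[X] equals J[X], where J = ⋂_{i=0}^{k} ann_A(a_iE) and J[X] denotes the ideal of A[X] consisting of all polynomials whose coefficients all lie in J. -/
/-- `E` is an *Armendariz module* if whenever `f(X) • e(X) = 0` in the polynomial
module `E[X]`, all products of coefficients `fᵢ • eⱼ` vanish. -/
def IsArmendariz (A : Type*) [CommRing A] (E : Type*) [AddCommGroup E]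
    [Module A E] : Prop :=
  ∀ (f : Polynomial A) (e : PolynomialModule A E), f • e = 0 →
    ∀ i j : ℕ, f.coeff i • e.coeff j = 0

/-!
If every coefficient of `f` kills each `aᵢE`, then every coefficient of `f p` kills `E`, hence
`f p` kills `E[X]`. Conversely, if `f` kills `p E[X]`, then `f • (p • m) = 0` for each constant
`m ∈ E`, and the Armendariz property splits this into `fₙ • aᵢ • m = 0`.
-/

open Polynomial

section

variable {R M : Type*} [CommRing R] [AddCommGroup M] [Module R M]

lemma mem_annihilator_span_singleton_smul_top (c a : R) :
    c ∈ (Ideal.span {a} • (⊤ : Submodule R M)).annihilator ↔ ∀ m : M, c • a • m = 0 := by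
  simp [Submodule.ideal_span_singleton_smul, Submodule.mem_annihilator,
    Submodule.mem_smul_pointwise_iff_exists]

lemma mem_iInf_annihilator_coeff_smul_top_iff {p : R[X]} {k : ℕ} (hp : p.natDegree ≤ k) (c : R) :
    c ∈ ⨅ i ∈ Finset.range (k + 1), (Ideal.span {p.coeff i} • (⊤ : Submodule R M)).annihilator ↔
      ∀ (i : ℕ) (m : M), c • p.coeff i • m = 0 := by
  simp only [Submodule.mem_iInf, Finset.mem_range, mem_annihilator_span_singleton_smul_top]
  refine ⟨fun h i m => ?_, fun h i _ => h i⟩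
  rcases Nat.lt_or_ge i (k + 1) with hi | hi
  · exact h i hi m
  · rw [coeff_eq_zero_of_natDegree_lt (by omega), zero_smul, smul_zero]

namespace PolynomialModule

lemma smul_eq_zero_of_forall_coeff_smul_eq_zero {q : R[X]}
    (hq : ∀ (n : ℕ) (m : M), q.coeff n • m = 0) (e : PolynomialModule R M) : q • e = 0 := by
  ext n
  rw [smul_apply]
  exact Finset.sum_eq_zero fun x _ => hq x.1 (e.coeff x.2)

lemma coeff_smul_single_zero (p : R[X]) (m : M) (n : ℕ) :
    (p • single R 0 m).coeff n = p.coeff n • m := by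
  simp

end PolynomialModule

end

theorem annihilator_polynomial_smul_general {A : Type*} [CommRing A]
    {E : Type*} [AddCommGroup E] [Module A E]
    (hArm : IsArmendariz A E) (k : ℕ) (p : Polynomial A) (hp : p.natDegree ≤ k) :
    ∀ f : Polynomial A,
      f ∈ (Ideal.span {p} •
        (⊤ : Submodule (Polynomial A) (PolynomialModule A E))).annihilator ↔
      ∀ n : ℕ, f.coeff n ∈ ⨅ i ∈ Finset.range (k + 1),
        (Ideal.span {p.coeff i} • (⊤ : Submodule A E)).annihilator := by
  intro f
  simp only [mem_annihilator_span_singleton_smul_top, mem_iInf_annihilator_coeff_smul_top_iff hp]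
  constructor
  · intro hf n i m
    simpa only [PolynomialModule.coeff_smul_single_zero] using
      hArm f _ (hf (PolynomialModule.single A 0 m)) n i
  · intro hf e
    rw [smul_smul]
    refine PolynomialModule.smul_eq_zero_of_forall_coeff_smul_eq_zero (fun n m => ?_) e
    rw [coeff_mul, Finset.sum_smul]
    exact Finset.sum_eq_zero fun x _ => by rw [mul_smul, hf]

/-- For an Armendariz module `E` and `p(X) = a₀ + a₁X + ⋯ + a_kX^k ∈ A[X]`, the
annihilator in `A[X]` of the submodule `p(X)·E[X]` of `E[X]` equals `J[X]`, where
`J = ⋂_{i=0}^{k} ann_A(aᵢE)`, i.e. it consists exactly of the polynomials all of whose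
coefficients lie in `J`. -/
theorem annihilator_polynomial_smul {A : Type*} [CommRing A] [Nontrivial A]
    {E : Type*} [AddCommGroup E] [Module A E] [Nontrivial E]
    (hArm : IsArmendariz A E) (k : ℕ) (p : Polynomial A) (hp : p.natDegree ≤ k) :
    ∀ f : Polynomial A,
      f ∈ (Ideal.span {p} •
        (⊤ : Submodule (Polynomial A) (PolynomialModule A E))).annihilator ↔
      ∀ n : ℕ, f.coeff n ∈ ⨅ i ∈ Finset.range (k + 1),
        (Ideal.span {p.coeff i} • (⊤ : Submodule A E)).annihilator :=
  annihilator_polynomial_smul_general hArm k p hp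
end

section
/- Let E be an annihilator multiplication A-module such that ann(e) ≠ ann(E) for every e ∈ E. Then the zero submodule of E is a classical prime submodule if and only if it is a classical 1-absorbing prime submodule. -/
/-- A proper submodule `V` of `E` is a *classical prime submodule* if `a • b • e ∈ V`
implies `a • e ∈ V` or `b • e ∈ V`. -/
def IsClassicalPrime {A : Type*} [CommRing A] {E : Type*} [AddCommGroup E]
    [Module A E] (V : Submodule A E) : Prop :=
  V ≠ ⊤ ∧ ∀ (a b : A) (e : E), a • b • e ∈ V → a • e ∈ V ∨ b • e ∈ V

/-- A proper submodule `V` of `E` is a *classical 1-absorbing prime submodule* if for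
nonunits `a, b, c` and `e ∈ E`, `a • b • c • e ∈ V` implies `a • b • e ∈ V` or
`c • e ∈ V`. -/
def IsClassicalOneAbsorbingPrime {A : Type*} [CommRing A] {E : Type*} [AddCommGroup E]
    [Module A E] (V : Submodule A E) : Prop :=
  V ≠ ⊤ ∧ ∀ (a b c : A) (e : E), ¬IsUnit a → ¬IsUnit b → ¬IsUnit c →
    a • b • c • e ∈ V → a • b • e ∈ V ∨ c • e ∈ V

/-!
A classical prime submodule is always classical 1-absorbing prime. Conversely, let `a b e = 0`
with `a, b` nonunits (the unit cases are trivial) and pick `I` with `ann(e) = ann(IE)`. Since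
`ann(e) ≠ ann(E)`, `I` is proper, so its elements are nonunits. If `b E ≠ 0`, then for every
`i ∈ I` the product `a i b` kills `E`, so by the 1-absorbing property every element of `E` is
killed by `a i` or by `b`; as `E` is not a union of two proper submodules, `a i` kills `E`.
Hence `a ∈ ann(IE) = ann(e)`.
-/

open Submodule

section

variable {A : Type*} [CommRing A] {E : Type*} [AddCommGroup E] [Module A E]

theorem Submodule.mem_annihilator_smul_iff {I : Ideal A} {N : Submodule A E} {a : A} :
    a ∈ (I • N).annihilator ↔ ∀ i ∈ I, a * i ∈ N.annihilator := by
  rw [mem_annihilator', smul_le]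
  simp only [mem_annihilator, mem_comap, mem_bot, LinearMap.smul_apply, LinearMap.id_apply,
    mul_smul]

theorem IsClassicalPrime.isClassicalOneAbsorbingPrime {V : Submodule A E}
    (h : IsClassicalPrime V) : IsClassicalOneAbsorbingPrime V := by
  refine ⟨h.1, fun a b c e _ _ _ habce => ?_⟩
  rw [← mul_smul b] at habce
  rcases h.2 a (b * c) e habce with hae | hbce
  · exact .inl (smul_comm a b e ▸ V.smul_mem b hae)
  · rw [mul_smul] at hbce
    exact (h.2 b c e hbce).imp_left (V.smul_mem a)

theorem IsClassicalOneAbsorbingPrime.mul_mem_annihilator_or_mem_annihilator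
    (h : IsClassicalOneAbsorbingPrime (⊥ : Submodule A E)) {a b c : A}
    (ha : ¬IsUnit a) (hb : ¬IsUnit b) (hc : ¬IsUnit c)
    (habc : a * b * c ∈ Module.annihilator A E) :
    a * b ∈ Module.annihilator A E ∨ c ∈ Module.annihilator A E := by
  let killedBy (r : A) : Submodule A E := comap (r • LinearMap.id) ⊥
  have hcover : ((⊤ : Submodule A E) : Set E) ⊆ killedBy (a * b) ∪ killedBy c := by
    intro x _
    have habcx : a • b • c • x = 0 := by
      rw [← mul_smul, ← mul_smul]; exact Module.mem_annihilator.mp habc x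
    simpa [killedBy, mul_smul] using h.2 a b c x ha hb hc habcx
  rw [← annihilator_top, mem_annihilator', mem_annihilator']
  exact AddSubgroupClass.subset_union.mp hcover

theorem IsClassicalOneAbsorbingPrime.bot_isClassicalPrime
    (h : IsClassicalOneAbsorbingPrime (⊥ : Submodule A E))
    (hE : ∀ e : E, ∃ I : Ideal A, I ≠ ⊤ ∧
      (span A {e}).annihilator = (I • (⊤ : Submodule A E)).annihilator) :
    IsClassicalPrime (⊥ : Submodule A E) := by
  refine ⟨h.1, fun a b e habe => ?_⟩
  simp only [mem_bot] at habe ⊢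
  obtain ⟨I, hI, hann⟩ := hE e
  by_cases ha : IsUnit a
  · exact .inr (ha.smul_eq_zero.mp habe)
  by_cases hb : IsUnit b
  · rw [smul_comm] at habe
    exact .inl (hb.smul_eq_zero.mp habe)
  by_cases hbE : b ∈ Module.annihilator A E
  · exact .inr (Module.mem_annihilator.mp hbE e)
  have hab : a * b ∈ (I • ⊤ : Submodule A E).annihilator := by
    rwa [← hann, mem_annihilator_span_singleton, mul_smul]
  suffices a ∈ (I • ⊤ : Submodule A E).annihilator by
    rw [← hann, mem_annihilator_span_singleton] at this
    exact .inl this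
  rw [mem_annihilator_smul_iff, annihilator_top] at hab ⊢
  intro i hi
  have hi' : ¬IsUnit i := fun hu => hI (I.eq_top_of_isUnit_mem hi hu)
  refine (h.mul_mem_annihilator_or_mem_annihilator ha hi' hb ?_).resolve_right hbE
  rw [mul_right_comm]
  exact hab i hi

end

theorem zero_classicalPrime_iff_general {A : Type*} [CommRing A]
    {E : Type*} [AddCommGroup E] [Module A E]
    (hE : IsAnnMultiplication A E)
    (hne : ∀ e : E, (Submodule.span A {e}).annihilator ≠
      (⊤ : Submodule A E).annihilator) :
    IsClassicalPrime (⊥ : Submodule A E) ↔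
      IsClassicalOneAbsorbingPrime (⊥ : Submodule A E) := by
  refine ⟨IsClassicalPrime.isClassicalOneAbsorbingPrime,
    fun h => h.bot_isClassicalPrime fun e => ?_⟩
  obtain ⟨I, -, hI⟩ := hE e
  refine ⟨I, fun hItop => hne e ?_, hI⟩
  rwa [hItop, top_smul] at hI

/-- If `E` is an annihilator multiplication module with `ann(e) ≠ ann(E)` for every
`e ∈ E`, then the zero submodule is classical prime iff it is classical 1-absorbing
prime. -/
theorem zero_classicalPrime_iff {A : Type*} [CommRing A] [Nontrivial A]
    {E : Type*} [AddCommGroup E] [Module A E] [Nontrivial E]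
    (hE : IsAnnMultiplication A E)
    (hne : ∀ e : E, (Submodule.span A {e}).annihilator ≠
      (⊤ : Submodule A E).annihilator) :
    IsClassicalPrime (⊥ : Submodule A E) ↔
      IsClassicalOneAbsorbingPrime (⊥ : Submodule A E) :=
  zero_classicalPrime_iff_general hE hne
end

section
/- Let E be a nonzero A-module. Then E is a torsion-free module if and only if A is an integral domain, E is a faithful A-module, and E is an annihilator multiplication A-module. -/
theorem noZeroSMulDivisors_iff_left_eq_zero_of_smul {R M : Type*} [Zero R] [Zero M] [SMul R M] :
    NoZeroSMulDivisors R M ↔ ∀ m : M, m ≠ 0 → ∀ r : R, r • m = 0 → r = 0 := by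
  simp_rw [noZeroSMulDivisors_iff, or_iff_not_imp_right]
  exact ⟨fun h m hm r eq ↦ h eq hm, fun h r m eq hm ↦ h m hm r eq⟩

section

variable {A E : Type*} [CommRing A] [AddCommGroup E] [Module A E]

variable (E) in
theorem isDomain_of_noZeroSMulDivisors [Nontrivial E] [NoZeroSMulDivisors A E] : IsDomain A := by
  have := Module.nontrivial A E
  obtain ⟨e, he⟩ := exists_ne (0 : E)
  have : NoZeroDivisors A := by
    refine ⟨fun {a b} hab ↦ or_iff_not_imp_right.mpr fun hb ↦ ?_⟩
    have hbe : b • e ≠ 0 := fun h ↦ (eq_zero_or_eq_zero_of_smul_eq_zero h).elim hb he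
    have habe : a • b • e = 0 := by rw [smul_smul, hab, zero_smul]
    exact (eq_zero_or_eq_zero_of_smul_eq_zero habe).resolve_right hbe
  exact NoZeroDivisors.to_isDomain A

theorem Submodule.annihilator_span_singleton_eq_bot [NoZeroSMulDivisors A E] {e : E}
    (he : e ≠ 0) : (span A {e}).annihilator = ⊥ :=
  eq_bot_iff.mpr fun a ha ↦ (eq_zero_or_eq_zero_of_smul_eq_zero
    ((mem_annihilator_span_singleton e a).mp ha)).resolve_right he

theorem Submodule.annihilator_top_eq_bot_of_ne_zero [NoZeroSMulDivisors A E] {e : E}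
    (he : e ≠ 0) : (⊤ : Submodule A E).annihilator = ⊥ :=
  eq_bot_iff.mpr <| (annihilator_span_singleton_eq_bot (A := A) he).symm ▸ annihilator_mono le_top

theorem isAnnMultiplication_of_noZeroSMulDivisors [NoZeroSMulDivisors A E] :
    IsAnnMultiplication A E := by
  intro e
  obtain rfl | he := eq_or_ne e 0
  · exact ⟨⊥, Submodule.fg_bot, by rw [Submodule.span_zero_singleton, Submodule.bot_smul]⟩
  · refine ⟨⊤, ⟨{1}, by simp⟩, ?_⟩
    rw [Submodule.top_smul, Submodule.annihilator_span_singleton_eq_bot he,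
      Submodule.annihilator_top_eq_bot_of_ne_zero he]

theorem Submodule.annihilator_smul_top_eq_bot [NoZeroDivisors A]
    (hE : (⊤ : Submodule A E).annihilator = ⊥) {I : Ideal A} (hI : I ≠ ⊥) :
    (I • (⊤ : Submodule A E)).annihilator = ⊥ := by
  obtain ⟨i, hiI, hi0⟩ := (Submodule.ne_bot_iff I).mp hI
  refine eq_bot_iff.mpr fun a ha ↦ ?_
  have hai : a * i ∈ (⊤ : Submodule A E).annihilator := mem_annihilator.mpr fun x _ ↦ by
    rw [mul_smul]
    exact mem_annihilator.mp ha _ (smul_mem_smul hiI mem_top)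
  rw [hE, mem_bot] at hai
  exact (mul_eq_zero.mp hai).resolve_right hi0

theorem noZeroSMulDivisors_of_isAnnMultiplication [NoZeroDivisors A]
    (hE : (⊤ : Submodule A E).annihilator = ⊥) (h : IsAnnMultiplication A E) :
    NoZeroSMulDivisors A E := by
  refine noZeroSMulDivisors_iff_left_eq_zero_of_smul.mpr fun e he a hae ↦ ?_
  obtain ⟨I, -, hI⟩ := h e
  have hI0 : I ≠ ⊥ := by
    rintro rfl
    rw [Submodule.bot_smul, Submodule.annihilator_bot, Submodule.annihilator_eq_top_iff,
      Submodule.span_singleton_eq_bot] at hI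
    exact he hI
  rwa [← Submodule.mem_annihilator_span_singleton, hI,
    Submodule.annihilator_smul_top_eq_bot hE hI0] at hae

end

theorem torsionFree_iff_general {A : Type*} [CommRing A]
    {E : Type*} [AddCommGroup E] [Module A E] [Nontrivial E] :
    (∀ e : E, e ≠ 0 → ∀ a : A, a • e = 0 → a = 0) ↔
      (IsDomain A ∧ (⊤ : Submodule A E).annihilator = ⊥ ∧
        IsAnnMultiplication A E) := by
  rw [← noZeroSMulDivisors_iff_left_eq_zero_of_smul]
  constructor
  · intro _
    obtain ⟨e, he⟩ := exists_ne (0 : E)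
    exact ⟨isDomain_of_noZeroSMulDivisors E, Submodule.annihilator_top_eq_bot_of_ne_zero he,
      isAnnMultiplication_of_noZeroSMulDivisors⟩
  · rintro ⟨_, hE, h⟩
    exact noZeroSMulDivisors_of_isAnnMultiplication hE h

/-- `E` is torsion-free iff `A` is an integral domain, `E` is a faithful `A`-module and
`E` is an annihilator multiplication `A`-module. -/
theorem torsionFree_iff {A : Type*} [CommRing A] [Nontrivial A]
    {E : Type*} [AddCommGroup E] [Module A E] [Nontrivial E] :
    (∀ e : E, e ≠ 0 → ∀ a : A, a • e = 0 → a = 0) ↔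
      (IsDomain A ∧ (⊤ : Submodule A E).annihilator = ⊥ ∧
        IsAnnMultiplication A E) :=
  torsionFree_iff_general
end

section
/- Let E be a second A-module that is also an annihilator multiplication module. Then E is a prime module, i.e., ann(e) = ann(E) for every nonzero e ∈ E (equivalently, ann(V) = ann(E) for every nonzero submodule V of E). Moreover, for every nonzero submodule V of E, V is a pure submodule of E if and only if V is a second submodule of E (i.e., for each a ∈ A, either aV = (0) or aV = V). -/
open Pointwise

/-!
In a second module `E`, every `IE` is `0` or `E`. For `e ≠ 0` the equation
`ann(e) = ann(IE)` rules out `IE = 0`, so `ann(e) = ann(E)`: `E` is prime. For a second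
submodule `V` likewise `IV` is `0` or `V`; when `IV = 0` primeness gives `IE = 0`, and when
`IV = V` we get `V ≤ IE`, so in both cases `IE ∩ V = IV`. Conversely purity applied to
`I = (a)` with `aE = E` gives `aV = V`.
-/

namespace Submodule

section CommSemiring

variable {A E : Type*} [CommSemiring A] [AddCommMonoid E] [Module A E]

def IsSecond (W : Submodule A E) : Prop :=
  ∀ a : A, a • W = ⊥ ∨ a • W = W

def IsPure (V : Submodule A E) : Prop :=
  ∀ I : Ideal A, I • (⊤ : Submodule A E) ⊓ V = I • V

theorem pointwise_smul_eq_bot_iff (a : A) (W : Submodule A E) :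
    a • W = ⊥ ↔ a ∈ W.annihilator := by
  rw [← ideal_span_singleton_smul, ← le_annihilator_iff, Ideal.span_singleton_le_iff_mem]

theorem IsSecond.ideal_smul_eq_bot_or_eq {W : Submodule A E} (hW : W.IsSecond) (I : Ideal A) :
    I • W = ⊥ ∨ I • W = W := by
  by_cases h : ∃ a ∈ I, a • W = W
  · obtain ⟨a, haI, ha⟩ := h
    refine Or.inr (le_antisymm smul_le_right ?_)
    calc W = a • W := ha.symm
      _ = Ideal.span {a} • W := (ideal_span_singleton_smul a W).symm
      _ ≤ I • W := smul_mono_left ((Ideal.span_singleton_le_iff_mem I).mpr haI)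
  · push Not at h
    refine Or.inl (le_annihilator_iff.mp fun a ha => ?_)
    exact (pointwise_smul_eq_bot_iff a W).mp ((hW a).resolve_right (h a ha))

theorem annihilator_eq_annihilator_top_of_ne_bot
    (hprime : ∀ e : E, e ≠ 0 → (span A {e}).annihilator = (⊤ : Submodule A E).annihilator)
    {V : Submodule A E} (hV : V ≠ ⊥) : V.annihilator = (⊤ : Submodule A E).annihilator := by
  obtain ⟨e, heV, he⟩ := (Submodule.ne_bot_iff V).mp hV
  refine le_antisymm ?_ (annihilator_mono le_top)
  rw [← hprime e he]
  exact annihilator_mono ((span_singleton_le_iff_mem e V).mpr heV)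

theorem IsPure.isSecond (htop : (⊤ : Submodule A E).IsSecond) {V : Submodule A E}
    (hV : V.IsPure) : V.IsSecond := by
  intro a
  rcases htop a with ha | ha
  · rw [pointwise_smul_eq_bot_iff] at ha ⊢
    exact Or.inl (annihilator_mono le_top ha)
  · have := hV (Ideal.span {a})
    rw [ideal_span_singleton_smul, ideal_span_singleton_smul, ha, top_inf_eq] at this
    exact Or.inr this.symm

theorem IsSecond.isPure {V : Submodule A E}
    (hann : V.annihilator ≤ (⊤ : Submodule A E).annihilator) (hV : V.IsSecond) : V.IsPure := by
  intro I
  rcases hV.ideal_smul_eq_bot_or_eq I with hI | hI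
  · have hItop : I • (⊤ : Submodule A E) = ⊥ :=
      le_annihilator_iff.mp ((le_annihilator_iff.mpr hI).trans hann)
    rw [hItop, hI, bot_inf_eq]
  · rw [hI]
    exact inf_eq_right.mpr (hI.symm.le.trans (smul_mono_right I le_top))

end CommSemiring

theorem annihilator_span_singleton_eq_annihilator_top {A E : Type*} [CommRing A]
    [AddCommGroup E] [Module A E] (hsec : (⊤ : Submodule A E).IsSecond)
    (hE : IsAnnMultiplication A E) {e : E} (he : e ≠ 0) :
    (span A {e}).annihilator = (⊤ : Submodule A E).annihilator := by
  obtain ⟨I, -, hIe⟩ := hE e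
  rcases hsec.ideal_smul_eq_bot_or_eq I with hI | hI
  · rw [hI, annihilator_bot, annihilator_eq_top_iff, span_singleton_eq_bot] at hIe
    exact absurd hIe he
  · rwa [hI] at hIe

end Submodule

theorem second_isAnnMultiplication_general {A : Type*} [CommRing A]
    {E : Type*} [AddCommGroup E] [Module A E]
    (hsec : ∀ a : A, a • (⊤ : Submodule A E) = ⊥ ∨ a • (⊤ : Submodule A E) = ⊤)
    (hE : IsAnnMultiplication A E) :
    (∀ e : E, e ≠ 0 →
      (Submodule.span A {e}).annihilator = (⊤ : Submodule A E).annihilator) ∧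
    (∀ V : Submodule A E, V ≠ ⊥ →
      V.annihilator = (⊤ : Submodule A E).annihilator) ∧
    (∀ V : Submodule A E, V ≠ ⊥ →
      ((∀ I : Ideal A, (I • (⊤ : Submodule A E)) ⊓ V = I • V) ↔
        (∀ a : A, a • V = ⊥ ∨ a • V = V))) := by
  have hprime := fun (e : E) (he : e ≠ 0) =>
    Submodule.annihilator_span_singleton_eq_annihilator_top hsec hE he
  have hann := fun (V : Submodule A E) (hV : V ≠ ⊥) =>
    Submodule.annihilator_eq_annihilator_top_of_ne_bot hprime hV
  exact ⟨hprime, hann, fun V hV =>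
    ⟨Submodule.IsPure.isSecond hsec, Submodule.IsSecond.isPure (hann V hV).le⟩⟩

/-- A second annihilator multiplication module `E` is a prime module
(`ann(e) = ann(E)` for nonzero `e`, equivalently `ann(V) = ann(E)` for nonzero `V`),
and its nonzero pure submodules coincide with its second submodules. -/
theorem second_isAnnMultiplication {A : Type*} [CommRing A] [Nontrivial A]
    {E : Type*} [AddCommGroup E] [Module A E] [Nontrivial E]
    (hsec : ∀ a : A, a • (⊤ : Submodule A E) = ⊥ ∨ a • (⊤ : Submodule A E) = ⊤)
    (hE : IsAnnMultiplication A E) :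
    (∀ e : E, e ≠ 0 →
      (Submodule.span A {e}).annihilator = (⊤ : Submodule A E).annihilator) ∧
    (∀ V : Submodule A E, V ≠ ⊥ →
      V.annihilator = (⊤ : Submodule A E).annihilator) ∧
    (∀ V : Submodule A E, V ≠ ⊥ →
      ((∀ I : Ideal A, (I • (⊤ : Submodule A E)) ⊓ V = I • V) ↔
        (∀ a : A, a • V = ⊥ ∨ a • V = V))) :=
  second_isAnnMultiplication_general hsec hE
end

section
/- For a commutative ring A, the following statements are equivalent: (i) A is a reduced ring and every faithful A-module is an annihilator multiplication module; (ii) A is a principal ideal ring and a von Neumann regular ring; (iii) A is isomorphic as a ring to a direct product of finitely many fields. -/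
universe u

def IsVonNeumannRegular (A : Type*) [CommRing A] : Prop :=
  ∀ a : A, ∃ x : A, a = a * x * a

section Idempotent

variable {A : Type*} [CommRing A] {e : A}

theorem IsIdempotentElem.annihilator_span_singleton (he : IsIdempotentElem e) :
    (Ideal.span {e}).annihilator = Ideal.span {1 - e} := by
  rw [← Ideal.submodule_span_eq, Submodule.annihilator_span_singleton,
    he.ker_toSpanSingleton_eq_span]

theorem IsIdempotentElem.isCompl_span_singleton (he : IsIdempotentElem e) :
    IsCompl (Ideal.span {e}) (Ideal.span {1 - e}) where
  disjoint := by
    rw [Submodule.disjoint_def]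
    intro x hxe hx
    obtain ⟨r, rfl⟩ := Ideal.mem_span_singleton'.mp hxe
    obtain ⟨s, hs⟩ := Ideal.mem_span_singleton'.mp hx
    calc r * e = r * e * e := by rw [mul_assoc, he.eq]
      _ = s * ((1 - e) * e) := by rw [← hs, mul_assoc]
      _ = 0 := by rw [sub_mul, one_mul, he.eq, sub_self, mul_zero]
  codisjoint := by
    rw [codisjoint_iff, Ideal.eq_top_iff_one]
    exact Ideal.mem_span_singleton_sup.mpr ⟨1, 1 - e, Ideal.mem_span_singleton_self _, by ring⟩

theorem IsIdempotentElem.span_singleton_sup_span_singleton {f : A} (he : IsIdempotentElem e)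
    (hf : IsIdempotentElem f) :
    Ideal.span {e} ⊔ Ideal.span {f} = Ideal.span {e + f - e * f} := by
  refine le_antisymm (sup_le ?_ ?_) ?_
  · exact Ideal.span_singleton_le_span_singleton.mpr ⟨e, by linear_combination (f - 1) * he.eq⟩
  · exact Ideal.span_singleton_le_span_singleton.mpr ⟨f, by linear_combination (e - 1) * hf.eq⟩
  · rw [Ideal.span_le, Set.singleton_subset_iff]
    exact Ideal.mem_span_singleton_sup.mpr ⟨1 - f, f, Ideal.mem_span_singleton_self f, by ring⟩

end Idempotent

namespace IsVonNeumannRegular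

variable {A : Type*} [CommRing A]

theorem isReduced (h : IsVonNeumannRegular A) : IsReduced A := by
  refine (isReduced_iff_pow_one_lt 2 one_lt_two).mpr fun a ha => ?_
  obtain ⟨x, hx⟩ := h a
  linear_combination hx + x * ha

theorem exists_isIdempotentElem_span_singleton_eq (h : IsVonNeumannRegular A) (a : A) :
    ∃ e : A, IsIdempotentElem e ∧ Ideal.span {a} = Ideal.span {e} := by
  obtain ⟨x, hx⟩ := h a
  refine ⟨a * x, by rw [IsIdempotentElem]; linear_combination x * hx.symm, le_antisymm ?_ ?_⟩
  · exact Ideal.span_singleton_le_span_singleton.mpr ⟨a, by linear_combination hx⟩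
  · exact Ideal.span_singleton_le_span_singleton.mpr ⟨x, rfl⟩

theorem exists_isIdempotentElem_eq_span_of_fg (h : IsVonNeumannRegular A) {I : Ideal A}
    (hI : I.FG) : ∃ e : A, IsIdempotentElem e ∧ I = Ideal.span {e} := by
  induction I, hI using Submodule.fg_induction with
  | singleton a => exact h.exists_isIdempotentElem_span_singleton_eq a
  | sup J₁ J₂ _ _ ih₁ ih₂ =>
    obtain ⟨e, he, rfl⟩ := ih₁
    obtain ⟨f, hf, rfl⟩ := ih₂
    exact ⟨_, he.add_sub_mul hf, he.span_singleton_sup_span_singleton hf⟩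

theorem exists_isIdempotentElem_eq_span [IsPrincipalIdealRing A] (h : IsVonNeumannRegular A)
    (I : Ideal A) : ∃ e : A, IsIdempotentElem e ∧ I = Ideal.span {e} :=
  h.exists_isIdempotentElem_eq_span_of_fg (IsNoetherian.noetherian I)

theorem isSemisimpleRing [IsPrincipalIdealRing A] (h : IsVonNeumannRegular A) :
    IsSemisimpleRing A := by
  refine (isSemisimpleModule_iff A A).mpr ⟨fun I => ?_⟩
  obtain ⟨e, he, rfl⟩ := h.exists_isIdempotentElem_eq_span I
  exact ⟨_, he.isCompl_span_singleton⟩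

end IsVonNeumannRegular

theorem IsSemisimpleRing.isVonNeumannRegular {A : Type*} [CommRing A] [IsSemisimpleRing A] :
    IsVonNeumannRegular A := by
  intro a
  obtain ⟨e, he, hae⟩ := IsSemisimpleRing.ideal_eq_span_idempotent (Ideal.span {a})
  obtain ⟨r, hr⟩ := Ideal.mem_span_singleton'.mp (hae ▸ Ideal.mem_span_singleton_self a)
  obtain ⟨s, hs⟩ := Ideal.mem_span_singleton'.mp (hae ▸ Ideal.mem_span_singleton_self e)
  refine ⟨s, ?_⟩
  calc a = r * e * e := by rw [mul_assoc, he.eq, hr]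
    _ = a * (s * a) := by rw [hr, hs]
    _ = a * s * a := by ring

theorem isSemisimpleRing_iff_isPrincipalIdealRing_and_isVonNeumannRegular {A : Type*}
    [CommRing A] : IsSemisimpleRing A ↔ IsPrincipalIdealRing A ∧ IsVonNeumannRegular A :=
  ⟨fun _ => ⟨inferInstance, IsSemisimpleRing.isVonNeumannRegular⟩,
    fun ⟨_, h⟩ => h.isSemisimpleRing⟩

theorem IsArtinianRing.exists_ringEquiv_pi_field (A : Type u) [CommRing A] [IsArtinianRing A]
    [IsReduced A] :
    ∃ (n : ℕ) (K : Fin n → Type u) (_ : ∀ i, Field (K i)), Nonempty (A ≃+* ∀ i, K i) := by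
  let _ : Fintype (MaximalSpectrum A) := Fintype.ofFinite _
  let σ := Fintype.equivFin (MaximalSpectrum A)
  exact ⟨_, fun i => A ⧸ (σ.symm i).asIdeal, fun i => Ideal.Quotient.field _,
    ⟨(IsArtinianRing.equivPi A).toRingEquiv.trans
      (RingEquiv.piCongrLeft' (fun I : MaximalSpectrum A => A ⧸ I.asIdeal) σ)⟩⟩

theorem isSemisimpleRing_iff_exists_ringEquiv_pi_field (A : Type u) [CommRing A] :
    IsSemisimpleRing A ↔
      ∃ (n : ℕ) (K : Fin n → Type u) (_ : ∀ i, Field (K i)), Nonempty (A ≃+* ∀ i, K i) := by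
  refine ⟨fun _ => ?_, fun ⟨n, K, _, ⟨φ⟩⟩ => φ.symm.isSemisimpleRing⟩
  have := IsSemisimpleRing.isVonNeumannRegular (A := A) |>.isReduced
  exact IsArtinianRing.exists_ringEquiv_pi_field A

section AnnMultiplication

variable {A : Type*} [CommRing A]

theorem Submodule.annihilator_smul_top_of_annihilator_top_eq_bot {E : Type*} [AddCommGroup E]
    [Module A E] (hE : (⊤ : Submodule A E).annihilator = ⊥) (I : Ideal A) :
    (I • (⊤ : Submodule A E)).annihilator = I.annihilator := by
  ext b
  simp only [Submodule.mem_annihilator, smul_eq_mul]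
  refine ⟨fun hb i hi => ?_, fun hb m hm => ?_⟩
  · have hbi : b * i ∈ (⊤ : Submodule A E).annihilator := Submodule.mem_annihilator.mpr
      fun m _ => by rw [mul_smul]; exact hb _ (Submodule.smul_mem_smul hi Submodule.mem_top)
    rwa [hE, Submodule.mem_bot] at hbi
  · exact Submodule.smul_induction_on hm (fun i hi m _ => by rw [← mul_smul, hb i hi, zero_smul])
      fun x y hx hy => by rw [smul_add, hx, hy, add_zero]

theorem isAnnMultiplication_of_forall_eq_annihilator {E : Type*} [AddCommGroup E] [Module A E]
    (hE : (⊤ : Submodule A E).annihilator = ⊥)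
    (h : ∀ J : Ideal A, ∃ I : Ideal A, I.FG ∧ J = I.annihilator) : IsAnnMultiplication A E :=
  fun e => by
    obtain ⟨I, hI, hJ⟩ := h (Submodule.span A {e}).annihilator
    exact ⟨I, hI, by rw [hJ, Submodule.annihilator_smul_top_of_annihilator_top_eq_bot hE]⟩

theorem annihilator_top_prod_quotient (J : Ideal A) :
    (⊤ : Submodule A (A × (A ⧸ J))).annihilator = ⊥ := by
  refine (Submodule.eq_bot_iff _).mpr fun b hb => ?_
  have h := Submodule.mem_annihilator.mp hb ((1 : A), (0 : A ⧸ J)) Submodule.mem_top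
  simpa using h

theorem annihilator_span_zero_mk_one (J : Ideal A) :
    (Submodule.span A {((0 : A), Ideal.Quotient.mk J 1)}).annihilator = J := by
  ext b
  simp [Algebra.smul_def, Ideal.Quotient.eq_zero_iff_mem]

theorem forall_isAnnMultiplication_iff {A : Type u} [CommRing A] :
    (∀ (E : Type u) [AddCommGroup E] [Module A E],
        (⊤ : Submodule A E).annihilator = ⊥ → IsAnnMultiplication A E) ↔
      ∀ J : Ideal A, ∃ I : Ideal A, I.FG ∧ J = I.annihilator := by
  refine ⟨fun h J => ?_, fun h E _ _ hE => isAnnMultiplication_of_forall_eq_annihilator hE h⟩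
  obtain ⟨I, hI, hJ⟩ := h _ (annihilator_top_prod_quotient J) ((0 : A), Ideal.Quotient.mk J 1)
  rw [annihilator_span_zero_mk_one,
    Submodule.annihilator_smul_top_of_annihilator_top_eq_bot (annihilator_top_prod_quotient J)] at hJ
  exact ⟨I, hI, hJ⟩

end AnnMultiplication

section AnnihilatorIdeals

variable {A : Type*} [CommRing A]

theorem IsVonNeumannRegular.of_forall_eq_annihilator [IsReduced A]
    (h : ∀ J : Ideal A, ∃ I : Ideal A, J = I.annihilator) : IsVonNeumannRegular A := by
  intro a
  obtain ⟨I, hI⟩ := h (Ideal.span {a * a})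
  have ha : a ∈ I.annihilator := Submodule.mem_annihilator.mpr fun i hi => by
    have haa : a * a * i = 0 :=
      Submodule.mem_annihilator.mp (hI ▸ Ideal.mem_span_singleton_self (a * a)) i hi
    exact IsReduced.eq_zero _ ⟨2, by linear_combination i * haa⟩
  obtain ⟨c, hc⟩ := Ideal.mem_span_singleton'.mp (hI ▸ ha)
  exact ⟨c, by linear_combination -hc⟩

theorem IsVonNeumannRegular.isPrincipalIdealRing_of_forall_eq_annihilator
    (hA : IsVonNeumannRegular A) (h : ∀ J : Ideal A, ∃ I : Ideal A, I.FG ∧ J = I.annihilator) :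
    IsPrincipalIdealRing A where
  principal J := by
    obtain ⟨I, hI, rfl⟩ := h J
    obtain ⟨e, he, rfl⟩ := hA.exists_isIdempotentElem_eq_span_of_fg hI
    rw [he.annihilator_span_singleton]
    infer_instance

theorem IsVonNeumannRegular.exists_fg_eq_annihilator [IsPrincipalIdealRing A]
    (hA : IsVonNeumannRegular A) (J : Ideal A) : ∃ I : Ideal A, I.FG ∧ J = I.annihilator := by
  obtain ⟨e, he, rfl⟩ := hA.exists_isIdempotentElem_eq_span J
  refine ⟨Ideal.span {1 - e}, Submodule.fg_span_singleton _, ?_⟩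
  rw [he.one_sub.annihilator_span_singleton, sub_sub_cancel]

end AnnihilatorIdeals

theorem reduced_annMult_iff_pir_vnr_iff_product_of_fields_general {A : Type u} [CommRing A] :
    ((IsReduced A ∧ ∀ (E : Type u) [AddCommGroup E] [Module A E],
        (⊤ : Submodule A E).annihilator = ⊥ → IsAnnMultiplication A E) ↔
      (IsPrincipalIdealRing A ∧ ∀ a : A, ∃ x : A, a = a * x * a)) ∧
    ((IsPrincipalIdealRing A ∧ ∀ a : A, ∃ x : A, a = a * x * a) ↔
      ∃ (n : ℕ) (K : Fin n → Type u) (_ : ∀ i, Field (K i)),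
        Nonempty (A ≃+* ∀ i, K i)) := by
  rw [forall_isAnnMultiplication_iff]
  refine ⟨⟨fun ⟨_, h⟩ => ?_, fun ⟨_, hA⟩ =>
    ⟨IsVonNeumannRegular.isReduced hA, IsVonNeumannRegular.exists_fg_eq_annihilator hA⟩⟩, ?_⟩
  · have hA : IsVonNeumannRegular A :=
      .of_forall_eq_annihilator fun J => (h J).imp fun _ => And.right
    exact ⟨hA.isPrincipalIdealRing_of_forall_eq_annihilator h, hA⟩
  · exact isSemisimpleRing_iff_isPrincipalIdealRing_and_isVonNeumannRegular.symm.trans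
      (isSemisimpleRing_iff_exists_ringEquiv_pi_field A)

/-- For a commutative ring `A` the following are equivalent: (i) `A` is reduced and
every faithful `A`-module is an annihilator multiplication module; (ii) `A` is a
principal ideal von Neumann regular ring; (iii) `A` is a finite direct product of
fields. -/
theorem reduced_annMult_iff_pir_vnr_iff_product_of_fields {A : Type u} [CommRing A]
    [Nontrivial A] :
    ((IsReduced A ∧ ∀ (E : Type u) [AddCommGroup E] [Module A E],
        (⊤ : Submodule A E).annihilator = ⊥ → IsAnnMultiplication A E) ↔
      (IsPrincipalIdealRing A ∧ ∀ a : A, ∃ x : A, a = a * x * a)) ∧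
    ((IsPrincipalIdealRing A ∧ ∀ a : A, ∃ x : A, a = a * x * a) ↔
      ∃ (n : ℕ) (K : Fin n → Type u) (_ : ∀ i, Field (K i)),
        Nonempty (A ≃+* ∀ i, K i)) :=
  reduced_annMult_iff_pir_vnr_iff_product_of_fields_general
end
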